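/- For every continuously differentiable matrix field P : ℝ³ → ℝ³ˣ³, one has sym Curl P = sym Curl (dev P) at every point of ℝ³, where dev P = P − (tr P/3)·𝟙 is the pointwise deviatoric (trace-free) part of P. -/

import Mathlib

/-- Partial derivative ∂ⱼ of a scalar field on ℝ³. -/
noncomputable def pd (j : Fin 3) (f : (Fin 3 → ℝ) → ℝ) (x : Fin 3 → ℝ) : ℝ :=
  fderiv ℝ f x (Pi.single j 1)

/-- curl of a vector field on ℝ³. -/
noncomputable def vcurl (v : (Fin 3 → ℝ) → (Fin 3 → ℝ)) (x : Fin 3 → ℝ) : Fin 3 → ℝ :=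
  ![pd 1 (fun y => v y 2) x - pd 2 (fun y => v y 1) x,
    pd 2 (fun y => v y 0) x - pd 0 (fun y => v y 2) x,
    pd 0 (fun y => v y 1) x - pd 1 (fun y => v y 0) x]

/-- divergence of a vector field on ℝ³. -/
noncomputable def vdiv (v : (Fin 3 → ℝ) → (Fin 3 → ℝ)) (x : Fin 3 → ℝ) : ℝ :=
  pd 0 (fun y => v y 0) x + pd 1 (fun y => v y 1) x + pd 2 (fun y => v y 2) x

/-- Row-wise matrix Curl of a matrix field on ℝ³. -/
noncomputable def MCurl (P : (Fin 3 → ℝ) → Fin 3 → Fin 3 → ℝ) (x : Fin 3 → ℝ) :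
    Fin 3 → Fin 3 → ℝ :=
  fun i => vcurl (fun y => P y i) x

/-- Row-wise matrix divergence of a matrix field on ℝ³. -/
noncomputable def MDiv (P : (Fin 3 → ℝ) → Fin 3 → Fin 3 → ℝ) (x : Fin 3 → ℝ) : Fin 3 → ℝ :=
  fun i => vdiv (fun y => P y i) x

/-- Symmetric part of a 3×3 matrix (as a function). -/
noncomputable def msym (M : Fin 3 → Fin 3 → ℝ) : Fin 3 → Fin 3 → ℝ :=
  fun i j => (M i j + M j i) / 2

/-- Trace of a 3×3 matrix (as a function). -/
def mtrace (M : Fin 3 → Fin 3 → ℝ) : ℝ := M 0 0 + M 1 1 + M 2 2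

/-- Deviatoric (trace-free) part of a 3×3 matrix. -/
noncomputable def mdev (M : Fin 3 → Fin 3 → ℝ) : Fin 3 → Fin 3 → ℝ :=
  fun i j => M i j - (mtrace M / 3) * (if i = j then 1 else 0)

/-!
Curl is linear, and the Curl of a scalar multiple `φ 𝟙` of the identity is skew-symmetric:
its entries are `(Curl (φ 𝟙))ᵢⱼ = εⱼₖᵢ ∂ₖφ`. Hence `sym Curl (P - φ 𝟙) = sym Curl P`, and
`dev P` is such a difference with `φ = tr P / 3`.
-/

lemma pd_sub {f g : (Fin 3 → ℝ) → ℝ} {x : Fin 3 → ℝ} (hf : DifferentiableAt ℝ f x)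
    (hg : DifferentiableAt ℝ g x) (k : Fin 3) :
    pd k (fun y => f y - g y) x = pd k f x - pd k g x := by
  simp only [pd, fderiv_fun_sub hf hg, sub_apply]

lemma vcurl_sub {v w : (Fin 3 → ℝ) → Fin 3 → ℝ} {x : Fin 3 → ℝ}
    (hv : ∀ i, DifferentiableAt ℝ (fun y => v y i) x)
    (hw : ∀ i, DifferentiableAt ℝ (fun y => w y i) x) :
    vcurl (fun y => v y - w y) x = vcurl v x - vcurl w x := by
  ext i
  fin_cases i <;> simp [vcurl, pd_sub (hv _) (hw _)] <;> ring

lemma MCurl_sub {P Q : (Fin 3 → ℝ) → Fin 3 → Fin 3 → ℝ} {x : Fin 3 → ℝ}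
    (hP : ∀ i j, DifferentiableAt ℝ (fun y => P y i j) x)
    (hQ : ∀ i j, DifferentiableAt ℝ (fun y => Q y i j) x) :
    MCurl (fun y => P y - Q y) x = MCurl P x - MCurl Q x :=
  funext fun i => vcurl_sub (hP i) (hQ i)

lemma MCurl_scalar_skew (φ : (Fin 3 → ℝ) → ℝ) (x : Fin 3 → ℝ) (i j : Fin 3) :
    MCurl (fun y i j => φ y * if i = j then 1 else 0) x j i =
      -MCurl (fun y i j => φ y * if i = j then 1 else 0) x i j := by
  fin_cases i <;> fin_cases j <;> simp [MCurl, vcurl, pd]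

lemma msym_sub (A B : Fin 3 → Fin 3 → ℝ) : msym (A - B) = msym A - msym B := by
  funext i j
  simp only [msym, Pi.sub_apply]
  ring

lemma mdev_eq_sub (M : Fin 3 → Fin 3 → ℝ) :
    mdev M = M - fun i j => mtrace M / 3 * if i = j then 1 else 0 :=
  rfl

lemma msym_eq_zero_of_skew {A : Fin 3 → Fin 3 → ℝ} (hA : ∀ i j, A j i = -A i j) :
    msym A = 0 := by
  funext i j
  simp [msym, hA i j]

/-- For every C¹ matrix field `P : ℝ³ → ℝ³ˣ³`, `sym (Curl P) = sym (Curl (dev P))`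
at every point. -/
theorem symCurl_eq_symCurl_dev (P : (Fin 3 → ℝ) → Fin 3 → Fin 3 → ℝ)
    (hP : ContDiff ℝ 1 P) :
    ∀ x : Fin 3 → ℝ, msym (MCurl P x) = msym (MCurl (fun y => mdev (P y)) x) := by
  intro x
  have hPx : ∀ i j, DifferentiableAt ℝ (fun y => P y i j) x := fun i j =>
    differentiable_pi.mp (differentiable_pi.mp (hP.differentiable one_ne_zero) i) j x
  have htr : DifferentiableAt ℝ (fun y => mtrace (P y)) x :=
    ((hPx 0 0).add (hPx 1 1)).add (hPx 2 2)
  have hφx : ∀ i j : Fin 3, DifferentiableAt ℝ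
      (fun y => mtrace (P y) / 3 * if i = j then (1 : ℝ) else 0) x := fun _ _ => by
    fun_prop
  simp only [mdev_eq_sub]
  rw [MCurl_sub hPx hφx, msym_sub, msym_eq_zero_of_skew (MCurl_scalar_skew _ x), sub_zero]
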